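/- arXiv:0910.1585 — 2 statements merged into one kernel-verified Lean document; each statement's English description precedes it below -/
import Mathlib

section
/- Model an asynchronous Boolean circuit with n components (inputs and logic gates) as an interaction system in which each component i has action space {0,1} and a deterministic, historyless, self-independent reaction function g_i : {0,1}^n → {0,1} (the gate's truth table, which does not depend on the gate's own current output). A stable Boolean assignment is a vector a ∈ {0,1}^n with g_i(a) = a_i for all i; the circuit is inherently stable if for every initial Boolean assignment and every fair schedule the dynamics is eventually constant. Theorem: if two distinct stable Boolean assignments exist for the circuit, then the circuit is not inherently stable. -/
/-- A schedule `σ` is fair if every node is activated infinitely often. -/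
def Fair {n : ℕ} (σ : ℕ → Finset (Fin n)) : Prop :=
  ∀ i : Fin n, ∀ N : ℕ, ∃ t, N ≤ t ∧ i ∈ σ t

/-- A schedule is `r`-fair if every node is activated at least once in every
`r` consecutive time steps. -/
def RFair {n : ℕ} (r : ℕ) (σ : ℕ → Finset (Fin n)) : Prop :=
  ∀ i : Fin n, ∀ t0 : ℕ, ∃ t, t0 ≤ t ∧ t < t0 + r ∧ i ∈ σ t

/-- A (deterministic, historyless) reaction function is self-independent if
it does not depend on node `i`'s own action. -/
def SelfIndependent {n : ℕ} {A : Fin n → Type*} (i : Fin n)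
    (g : (∀ j, A j) → A i) : Prop :=
  ∀ a b : ∀ j, A j, (∀ j, j ≠ i → a j = b j) → g a = g b

/-- A stable state is a fixed point of all reaction functions. -/
def Stable {n : ℕ} {A : Fin n → Type*}
    (g : ∀ i : Fin n, (∀ j, A j) → A i) (a : ∀ j, A j) : Prop :=
  ∀ i, g i a = a i

/-- The `(s0, σ)`-dynamics of a system of deterministic historyless reaction
functions: at each time step, each activated node reacts to the current
profile and the other nodes repeat their previous action. -/
def dynamics {n : ℕ} {A : Fin n → Type*}
    (g : ∀ i : Fin n, (∀ j, A j) → A i) (s0 : ∀ j, A j)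
    (σ : ℕ → Finset (Fin n)) : ℕ → ∀ j, A j
  | 0 => s0
  | t + 1 => fun i =>
      if i ∈ σ (t + 1) then g i (dynamics g s0 σ t) else dynamics g s0 σ t i

/-- A sequence converges if it is eventually constant. -/
def EventuallyConstant {α : Type*} (s : ℕ → α) : Prop :=
  ∃ t0 : ℕ, ∀ t, t0 ≤ t → s t = s t0

/-- The system is convergent if the dynamics converges for every initial
profile and every fair schedule. -/
def Convergent {n : ℕ} {A : Fin n → Type*}
    (g : ∀ i : Fin n, (∀ j, A j) → A i) : Prop :=
  ∀ (s0 : ∀ j, A j) (σ : ℕ → Finset (Fin n)),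
    (∀ t, (σ t).Nonempty) → Fair σ → EventuallyConstant (dynamics g s0 σ)

/-- The system is `r`-convergent if the dynamics converges for every initial
profile and every `r`-fair schedule. -/
def RConvergent {n : ℕ} {A : Fin n → Type*} (r : ℕ)
    (g : ∀ i : Fin n, (∀ j, A j) → A i) : Prop :=
  ∀ (s0 : ∀ j, A j) (σ : ℕ → Finset (Fin n)),
    (∀ t, (σ t).Nonempty) → RFair r σ → EventuallyConstant (dynamics g s0 σ)


/-!
This is the bivalence argument of Fischer, Lynch and Paterson. Call a profile univalent if exactly
one stable profile is reachable from it by activations. If every profile were univalent, the stable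
profile reachable from `x` would not change when a single coordinate `x j` changes, since activating
the self-independent node `j` erases the change; so it would be constant, which two distinct stable
profiles rule out. From a non-univalent profile `x` and any node `i`, some activation sequence in
which `i` reacts leads to a non-univalent profile: otherwise, since activating `i` alone, together
with other nodes, or after them leads to the same stable profile (self-independence again), the
stable profile reached right after activating `i` would be the same from every profile reachable
from `x`, and `x` would be univalent. Chaining such sequences into rounds that activate every node,
round after round, gives a fair schedule along which non-univalent profiles recur; but a limit of
the dynamics under a fair schedule is stable, hence univalent.
-/

namespace InteractionSystem

variable {n : ℕ} {A : Fin n → Type*}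

section Activation

variable (g : ∀ i : Fin n, (∀ j, A j) → A i)

def react (I : Finset (Fin n)) (x : ∀ j, A j) : ∀ j, A j :=
  fun j => if j ∈ I then g j x else x j

def reactSeq (x : ∀ j, A j) (L : List (Finset (Fin n))) : ∀ j, A j :=
  L.foldl (fun y I => react g I y) x

def outcomes (x : ∀ j, A j) : Set (∀ j, A j) :=
  {p | Stable g p ∧ ∃ L, reactSeq g x L = p}

def Univalent (x : ∀ j, A j) : Prop :=
  ∃ p, outcomes g x = {p}

def UnivalentOnceActivated (i : Fin n) (x : ∀ j, A j) : Prop :=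
  ∀ L : List (Finset (Fin n)), (∃ I ∈ L, i ∈ I) → Univalent g (reactSeq g x L)

variable {g}

theorem dynamics_succ (s0 : ∀ j, A j) (σ : ℕ → Finset (Fin n)) (t : ℕ) :
    dynamics g s0 σ (t + 1) = react g (σ (t + 1)) (dynamics g s0 σ t) :=
  rfl

@[simp]
theorem reactSeq_nil (x : ∀ j, A j) : reactSeq g x [] = x :=
  rfl

@[simp]
theorem reactSeq_cons (x : ∀ j, A j) (I : Finset (Fin n)) (L : List (Finset (Fin n))) :
    reactSeq g x (I :: L) = reactSeq g (react g I x) L :=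
  rfl

@[simp]
theorem reactSeq_append (x : ∀ j, A j) (L L' : List (Finset (Fin n))) :
    reactSeq g x (L ++ L') = reactSeq g (reactSeq g x L) L' :=
  List.foldl_append

theorem react_empty (x : ∀ j, A j) : react g ∅ x = x := by
  funext j
  simp [react]

theorem reactSeq_filter_nonempty (x : ∀ j, A j) (L : List (Finset (Fin n))) :
    reactSeq g x (L.filter (·.Nonempty)) = reactSeq g x L := by
  induction L generalizing x with
  | nil => rfl
  | cons I L ih =>
    rcases I.eq_empty_or_nonempty with rfl | hI
    · simp [ih, react_empty]
    · simp [hI, ih]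

theorem _root_.Stable.react_eq {p : ∀ j, A j} (hp : Stable g p) (I : Finset (Fin n)) :
    react g I p = p := by
  funext j
  by_cases hj : j ∈ I <;> simp [react, hj, hp j]

theorem _root_.Stable.reactSeq_eq {p : ∀ j, A j} (hp : Stable g p) (L : List (Finset (Fin n))) :
    reactSeq g p L = p := by
  induction L with
  | nil => rfl
  | cons I L ih => rw [reactSeq_cons, hp.react_eq, ih]

theorem _root_.Stable.outcomes_eq {p : ∀ j, A j} (hp : Stable g p) : outcomes g p = {p} := by
  ext q
  constructor
  · rintro ⟨-, L, rfl⟩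
    exact hp.reactSeq_eq L
  · rintro rfl
    exact ⟨hp, [], rfl⟩

theorem outcomes_reactSeq_subset (x : ∀ j, A j) (L : List (Finset (Fin n))) :
    outcomes g (reactSeq g x L) ⊆ outcomes g x := by
  rintro q ⟨hq, L', rfl⟩
  exact ⟨hq, L ++ L', reactSeq_append x L L'⟩

theorem outcomes_react_subset (x : ∀ j, A j) (I : Finset (Fin n)) :
    outcomes g (react g I x) ⊆ outcomes g x :=
  outcomes_reactSeq_subset x [I]

theorem react_singleton_eq_of_eq_off {j : Fin n} (hj : SelfIndependent j (g j))
    {x y : ∀ k, A k} (hxy : ∀ k, k ≠ j → x k = y k) :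
    react g {j} x = react g {j} y := by
  funext k
  by_cases hk : k = j
  · subst hk
    simp [react, hj x y hxy]
  · simp [react, hk, hxy k hk]

theorem outcomes_react_singleton_subset_inter {j : Fin n} (hj : SelfIndependent j (g j))
    {x y : ∀ k, A k} (hxy : ∀ k, k ≠ j → x k = y k) :
    outcomes g (react g {j} x) ⊆ outcomes g x ∩ outcomes g y := by
  refine Set.subset_inter (outcomes_react_subset x {j}) ?_
  rw [react_singleton_eq_of_eq_off hj hxy]
  exact outcomes_react_subset y {j}

theorem dynamics_length_eq_reactSeq {σ : ℕ → Finset (Fin n)} {L : List (Finset (Fin n))}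
    (hσ : ∀ t (ht : t < L.length), σ (t + 1) = L[t]) (x : ∀ j, A j) :
    dynamics g x σ L.length = reactSeq g x L := by
  suffices ∀ t ≤ L.length, dynamics g x σ t = reactSeq g x (L.take t) by
    simpa using this L.length le_rfl
  intro t ht
  induction t with
  | zero => rfl
  | succ t ih =>
    rw [dynamics_succ, ih (by omega), List.take_add_one, List.getElem?_eq_getElem (by omega),
      hσ t (by omega), reactSeq_append]
    rfl

end Activation

variable {g : ∀ i : Fin n, (∀ j, A j) → A i}

section Bivalence

namespace UnivalentOnceActivated

variable {i : Fin n} {x : ∀ j, A j}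

theorem after (h : UnivalentOnceActivated g i x) (L : List (Finset (Fin n))) :
    UnivalentOnceActivated g i (reactSeq g x L) := by
  rintro L' ⟨I, hI, hiI⟩
  rw [← reactSeq_append]
  exact h _ ⟨I, List.mem_append_right L hI, hiI⟩

theorem univalent_react (h : UnivalentOnceActivated g i x) {I : Finset (Fin n)} (hiI : i ∈ I) :
    Univalent g (react g I x) :=
  h [I] ⟨I, List.mem_singleton_self I, hiI⟩

theorem eq_of_outcomes_react_insert (hsi : ∀ i, SelfIndependent i (g i))
    (h : UnivalentOnceActivated g i x) {I : Finset (Fin n)} (hiI : i ∈ I) (j : Fin n)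
    {p q : ∀ j, A j} (hp : outcomes g (react g (insert j I) x) = {p})
    (hq : outcomes g (react g I x) = {q}) : p = q := by
  obtain ⟨r, hr⟩ : Univalent g (react g {j} (react g (insert j I) x)) :=
    h [insert j I, {j}] ⟨_, List.mem_cons_self, Finset.mem_insert_of_mem hiI⟩
  have hsub := outcomes_react_singleton_subset_inter (hsi j)
    (x := react g (insert j I) x) (y := react g I x) fun k hk => by simp [react, hk]
  rw [hr, hp, hq] at hsub
  have hrp := hsub (Set.mem_singleton r)
  exact hrp.1.symm.trans hrp.2

theorem eq_of_outcomes_react (hsi : ∀ i, SelfIndependent i (g i))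
    (h : UnivalentOnceActivated g i x) {I : Finset (Fin n)} (hiI : i ∈ I)
    {p q : ∀ j, A j} (hp : outcomes g (react g I x) = {p})
    (hq : outcomes g (react g {i} x) = {q}) : p = q := by
  suffices ∀ J : Finset (Fin n), ∀ p, outcomes g (react g (insert i J) x) = {p} → p = q by
    exact this I p (by rwa [Finset.insert_eq_of_mem hiI])
  intro J
  induction J using Finset.induction_on with
  | empty =>
    intro p hp
    exact Set.singleton_eq_singleton_iff.1 (hp.symm.trans hq)
  | insert j J _ ih =>
    intro p hp
    obtain ⟨p', hp'⟩ := h.univalent_react (Finset.mem_insert_self i J)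
    rw [Finset.insert_comm] at hp
    exact (eq_of_outcomes_react_insert hsi h (Finset.mem_insert_self i J) j hp hp').trans
      (ih p' hp')

theorem eq_of_outcomes_react_singleton_react (hsi : ∀ i, SelfIndependent i (g i))
    (h : UnivalentOnceActivated g i x) (J : Finset (Fin n)) {p q : ∀ j, A j}
    (hp : outcomes g (react g {i} (react g J x)) = {p})
    (hq : outcomes g (react g {i} x) = {q}) : p = q := by
  obtain ⟨p', hp'⟩ := h.univalent_react (Finset.mem_insert_self i J)
  have hsub : outcomes g (react g {i} (react g J x)) ⊆ outcomes g (react g (insert i J) x) := by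
    rw [← react_singleton_eq_of_eq_off (hsi i) (x := react g (insert i J) x) fun k hk => by
      simp [react, hk]]
    exact outcomes_react_subset _ _
  rw [hp, hp'] at hsub
  exact (Set.singleton_subset_singleton.1 hsub).trans
    (eq_of_outcomes_react hsi h (Finset.mem_insert_self i J) hp' hq)

theorem outcomes_subset (hsi : ∀ i, SelfIndependent i (g i))
    (h : UnivalentOnceActivated g i x) {q : ∀ j, A j}
    (hq : outcomes g (react g {i} x) = {q}) : outcomes g x ⊆ {q} := by
  rintro r ⟨hr, L, rfl⟩
  induction L generalizing x with
  | nil =>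
    rw [reactSeq_nil] at hr ⊢
    rw [hr.react_eq, hr.outcomes_eq] at hq
    exact hq.symm ▸ Set.mem_singleton x
  | cons I L ih =>
    obtain ⟨p, hp⟩ := (h.after [I]).univalent_react (Finset.mem_singleton_self i)
    refine ih (h.after [I]) ?_ hr
    rwa [eq_of_outcomes_react_singleton_react hsi h I hp hq] at hp

end UnivalentOnceActivated

theorem exists_reactSeq_not_univalent_activating (hsi : ∀ i, SelfIndependent i (g i))
    {x : ∀ j, A j} (hx : ¬ Univalent g x) (i : Fin n) :
    ∃ L : List (Finset (Fin n)), (∃ I ∈ L, i ∈ I) ∧ ¬ Univalent g (reactSeq g x L) := by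
  by_contra! h
  change UnivalentOnceActivated g i x at h
  obtain ⟨q, hq⟩ := h.univalent_react (Finset.mem_singleton_self i)
  exact hx ⟨q, (h.outcomes_subset hsi hq).antisymm (hq ▸ outcomes_react_subset x {i})⟩

theorem _root_.Function.eq_of_forall_update_eq {ι : Type*} [Fintype ι] [DecidableEq ι]
    {β : ι → Type*} {γ : Sort*} (f : (∀ i, β i) → γ)
    (hf : ∀ x i c, f (Function.update x i c) = f x) (x y : ∀ i, β i) : f x = f y := by
  have key : ∀ s : Finset ι, f (fun i => if i ∈ s then y i else x i) = f x := by
    intro s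
    induction s using Finset.induction_on with
    | empty => simp
    | insert j s _ ih =>
      rw [← ih, ← hf (fun i => if i ∈ s then y i else x i) j (y j)]
      congr 1
      funext i
      by_cases hi : i = j
      · subst hi
        simp
      · simp [hi]
  simpa using (key Finset.univ).symm

theorem exists_not_univalent (hsi : ∀ i, SelfIndependent i (g i)) {a b : ∀ j, A j}
    (ha : Stable g a) (hb : Stable g b) (hab : a ≠ b) : ∃ x, ¬ Univalent g x := by
  by_contra! hU
  choose u hu using hU
  have hupdate : ∀ x j c, u (Function.update x j c) = u x := by
    intro x j c
    have hsub := outcomes_react_singleton_subset_inter (hsi j) (x := Function.update x j c)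
      (y := x) fun k hk => Function.update_of_ne hk c x
    rw [hu, hu, hu] at hsub
    have hr := hsub (Set.mem_singleton _)
    exact hr.1.symm.trans hr.2
  have hua : u a = a := Set.singleton_eq_singleton_iff.1 ((hu a).symm.trans ha.outcomes_eq)
  have hub : u b = b := Set.singleton_eq_singleton_iff.1 ((hu b).symm.trans hb.outcomes_eq)
  exact hab (hua.symm.trans ((Function.eq_of_forall_update_eq u hupdate a b).trans hub))

theorem exists_reactSeq_not_univalent_activating_all (hsi : ∀ i, SelfIndependent i (g i))
    {x : ∀ j, A j} (hx : ¬ Univalent g x) :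
    ∃ L : List (Finset (Fin n)), (∀ I ∈ L, I.Nonempty) ∧ (∀ i, ∃ I ∈ L, i ∈ I) ∧
      ¬ Univalent g (reactSeq g x L) := by
  have hcover : ∀ s : Finset (Fin n), ∃ L : List (Finset (Fin n)),
      (∀ i ∈ s, ∃ I ∈ L, i ∈ I) ∧ ¬ Univalent g (reactSeq g x L) := by
    intro s
    induction s using Finset.induction_on with
    | empty => exact ⟨[], by simp, hx⟩
    | insert i s _ ih =>
      obtain ⟨L, hL, hLx⟩ := ih
      obtain ⟨L', hiL', hL'x⟩ := exists_reactSeq_not_univalent_activating hsi hLx i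
      refine ⟨L ++ L', (Finset.forall_mem_insert _ _ _).2 ⟨?_, ?_⟩, ?_⟩
      · obtain ⟨I, hI, hiI⟩ := hiL'
        exact ⟨I, List.mem_append_right L hI, hiI⟩
      · intro j hj
        obtain ⟨I, hI, hjI⟩ := hL j hj
        exact ⟨I, List.mem_append_left L' hI, hjI⟩
      · rwa [reactSeq_append]
  obtain ⟨L, hL, hLx⟩ := hcover Finset.univ
  refine ⟨L.filter (·.Nonempty), by simp, fun i => ?_, by rwa [reactSeq_filter_nonempty]⟩
  obtain ⟨I, hI, hiI⟩ := hL i (Finset.mem_univ i)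
  exact ⟨I, List.mem_filter.2 ⟨hI, decide_eq_true ⟨i, hiI⟩⟩, hiI⟩

end Bivalence

section Schedule

open List

variable {α : Type*} (R : ℕ → List α)

/-- The infinite concatenation `R 0 ++ R 1 ++ ⋯`, read as a sequence; `d` is never used when
every `R k` is nonempty. -/
def flattenSeq (d : α) (t : ℕ) : α :=
  ((range (t + 1)).flatMap R).getD t d

theorem flatMap_range_succ (k : ℕ) :
    (range (k + 1)).flatMap R = (range k).flatMap R ++ R k := by
  simp [range_succ]

theorem flatMap_range_prefix {k k' : ℕ} (h : k ≤ k') :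
    (range k).flatMap R <+: (range k').flatMap R := by
  obtain ⟨m, rfl⟩ := Nat.exists_eq_add_of_le h
  rw [range_add]
  exact (prefix_append _ _).flatMap R

variable {R}

theorem le_length_flatMap_range (hR : ∀ k, R k ≠ []) (k : ℕ) :
    k ≤ ((range k).flatMap R).length := by
  induction k with
  | zero => simp
  | succ k ih =>
    rw [flatMap_range_succ, length_append]
    have := length_pos_iff.2 (hR k)
    omega

theorem flattenSeq_eq_getElem (hR : ∀ k, R k ≠ []) (d : α) {k t : ℕ}
    (ht : t < ((range k).flatMap R).length) : flattenSeq R d t = ((range k).flatMap R)[t] := by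
  have ht' : t < ((range (t + 1)).flatMap R).length :=
    lt_of_lt_of_le t.lt_succ_self (le_length_flatMap_range hR _)
  rw [flattenSeq, getD_eq_getElem _ _ ht']
  rcases le_total k (t + 1) with h | h
  · exact ((flatMap_range_prefix R h).getElem ht).symm
  · exact (flatMap_range_prefix R h).getElem ht'

theorem exists_mem_flattenSeq (hR : ∀ k, R k ≠ []) (d : α) (t : ℕ) :
    ∃ k, flattenSeq R d t ∈ R k := by
  have ht : t < ((range (t + 1)).flatMap R).length :=
    lt_of_lt_of_le t.lt_succ_self (le_length_flatMap_range hR _)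
  rw [flattenSeq_eq_getElem hR d ht]
  obtain ⟨k, -, hk⟩ := mem_flatMap.1 (getElem_mem ht)
  exact ⟨k, hk⟩

theorem exists_flattenSeq_eq (hR : ∀ k, R k ≠ []) (d : α) {k : ℕ} {a : α} (ha : a ∈ R k) :
    ∃ t, k ≤ t ∧ flattenSeq R d t = a := by
  obtain ⟨s, hs, rfl⟩ := getElem_of_mem ha
  have hlt : ((range k).flatMap R).length + s < ((range (k + 1)).flatMap R).length := by
    simp [flatMap_range_succ, hs]
  refine ⟨_, (le_length_flatMap_range hR k).trans (Nat.le_add_right _ s), ?_⟩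
  rw [flattenSeq_eq_getElem hR d hlt]
  simp [flatMap_range_succ, getElem_append_right]

end Schedule


theorem exists_fair_schedule_frequently [Nonempty (Fin n)] {P : (∀ j, A j) → Prop}
    (hP : ∀ x, P x → ∃ L : List (Finset (Fin n)), (∀ I ∈ L, I.Nonempty) ∧
      (∀ i, ∃ I ∈ L, i ∈ I) ∧ P (reactSeq g x L))
    {x₀ : ∀ j, A j} (hx₀ : P x₀) :
    ∃ σ : ℕ → Finset (Fin n), (∀ t, (σ t).Nonempty) ∧ Fair σ ∧
      ∃ᶠ t in Filter.atTop, P (dynamics g x₀ σ t) := by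
  choose R hRne hRcover hRP using fun x : {x // P x} => hP x.1 x.2
  let next : {x // P x} → {x // P x} := fun x => ⟨reactSeq g x (R x), hRP x⟩
  let y : ℕ → {x // P x} := fun k => next^[k] ⟨x₀, hx₀⟩
  have hR : ∀ k, R (y k) ≠ [] := fun k hk => by
    simpa [hk] using hRcover (y k) (Classical.arbitrary _)
  have hy : ∀ k, reactSeq g x₀ ((List.range k).flatMap (fun k => R (y k))) = y k := by
    intro k
    induction k with
    | zero => rfl
    | succ k ih =>
      rw [flatMap_range_succ, reactSeq_append, ih]
      simp only [y, Function.iterate_succ_apply']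
      rfl
  -- `dynamics` never reads `σ 0`; the truncated `t - 1` makes `σ 0 = σ 1`.
  refine ⟨fun t => flattenSeq (fun k => R (y k)) ∅ (t - 1), fun t => ?_, fun i N => ?_,
    Filter.frequently_atTop.2 fun N => ?_⟩
  · obtain ⟨k, hk⟩ := exists_mem_flattenSeq hR ∅ (t - 1)
    exact hRne _ _ hk
  · obtain ⟨I, hI, hiI⟩ := hRcover (y N) i
    obtain ⟨t, hNt, ht⟩ := exists_flattenSeq_eq hR ∅ hI
    exact ⟨t + 1, by omega, by simpa only [Nat.add_sub_cancel, ht]⟩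
  · refine ⟨_, le_length_flatMap_range hR N, ?_⟩
    rw [dynamics_length_eq_reactSeq (fun t ht => flattenSeq_eq_getElem hR ∅ ht), hy]
    exact (y N).2

theorem stable_dynamics_of_forall_le_eq {s₀ : ∀ j, A j} {σ : ℕ → Finset (Fin n)}
    (hσ : Fair σ) {t₀ : ℕ} (h : ∀ t, t₀ ≤ t → dynamics g s₀ σ t = dynamics g s₀ σ t₀) :
    Stable g (dynamics g s₀ σ t₀) := by
  intro i
  obtain ⟨_ | t, ht, hit⟩ := hσ i (t₀ + 1)
  · omega
  have hstep := congrFun (dynamics_succ (g := g) s₀ σ t) i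
  rw [h (t + 1) (by omega), h t (by omega)] at hstep
  simpa [react, hit] using hstep.symm

theorem not_convergent_of_stable_ne (hsi : ∀ i, SelfIndependent i (g i)) {a b : ∀ j, A j}
    (ha : Stable g a) (hb : Stable g b) (hab : a ≠ b) : ¬ Convergent g := by
  obtain ⟨i, -⟩ := Function.ne_iff.1 hab
  have : Nonempty (Fin n) := ⟨i⟩
  obtain ⟨x₀, hx₀⟩ := exists_not_univalent hsi ha hb hab
  obtain ⟨σ, hσne, hσfair, hfrequently⟩ :=
    exists_fair_schedule_frequently (P := fun x => ¬ Univalent g x)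
      (fun _ hx => exists_reactSeq_not_univalent_activating_all hsi hx) hx₀
  intro hconv
  obtain ⟨t₀, ht₀⟩ := hconv x₀ σ hσne hσfair
  obtain ⟨t, ht, hnot⟩ := Filter.frequently_atTop.1 hfrequently t₀
  rw [ht₀ t ht] at hnot
  exact hnot ⟨_, (stable_dynamics_of_forall_le_eq hσfair ht₀).outcomes_eq⟩

end InteractionSystem

/-- An asynchronous Boolean circuit, modelled as an
interaction system whose components have action space `Bool` and
deterministic, historyless, self-independent reaction functions (truth
tables), is not inherently stable whenever it admits two distinct stable
Boolean assignments. -/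
theorem circuit_two_stable_assignments_not_inherently_stable
    {n : ℕ} (g : ∀ _ : Fin n, (Fin n → Bool) → Bool)
    (hsi : ∀ i, SelfIndependent (A := fun _ : Fin n => Bool) i (g i))
    (a b : Fin n → Bool) (hab : a ≠ b)
    (ha : ∀ i, g i a = a i) (hb : ∀ i, g i b = b i) :
    ∃ (s0 : Fin n → Bool) (σ : ℕ → Finset (Fin n)),
      (∀ t, (σ t).Nonempty) ∧ Fair σ ∧
      ¬ EventuallyConstant (dynamics g s0 σ) := by
  simpa [Convergent] using InteractionSystem.not_convergent_of_stable_ne hsi ha hb hab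
end

section
/- Consider a convergent interaction system with deterministic, historyless, self-independent reaction functions g_1,…,g_n. If there are initial profiles s and s' and fair schedules under which the respective dynamics converge to two distinct stable states, then there exists a single initial profile from which the dynamics under two different fair schedules converge to two distinct stable states (i.e., a polychromatic initial state exists, from which multiple stable states are reachable). -/
/-- The `(s0,σ)`-dynamics converges to the profile `a`. -/
def ConvergesTo {n : ℕ} {A : Fin n → Type*}
    (g : ∀ i : Fin n, (∀ j, A j) → A i) (s0 : ∀ j, A j)
    (σ : ℕ → Finset (Fin n)) (a : ∀ j, A j) : Prop :=
  ∃ t0 : ℕ, ∀ t, t0 ≤ t → dynamics g s0 σ t = a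


/-!
Suppose no initial profile is polychromatic, so that every profile `x` has at most one stable state
reachable from `x` under a fair schedule. Two profiles `x`, `y` differing only at node `i` then
reach the same stable state: activating `i` alone first sends both to the same profile, because
`g i` ignores node `i`'s own action, and any fair run from there can be prepended by this step.
Changing `s` into `s'` one coordinate at a time shows that `s'` reaches `a`, hence `a = b`.
-/

open Function

theorem imp_of_forall_update {ι : Type*} [Fintype ι] [DecidableEq ι] {A : ι → Type*}
    {P : (∀ i, A i) → Prop} (h : ∀ x i v, P x → P (update x i v)) (x y : ∀ i, A i)
    (hx : P x) : P y := by
  have key : ∀ F : Finset ι, P (F.piecewise y x) := by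
    intro F
    induction F using Finset.induction_on with
    | empty => simpa using hx
    | insert i F _ ih =>
      rw [Finset.piecewise_insert]
      exact h _ _ _ ih
  simpa using key Finset.univ

/-- Time `0` of a schedule is never consulted by `dynamics`; it is `S` only to keep the schedule
nonempty. -/
def consSchedule {α : Type*} (S : α) (ρ : ℕ → α) : ℕ → α
  | 0 => S
  | 1 => S
  | t + 2 => ρ (t + 1)

section Dynamics

variable {n : ℕ} {A : Fin n → Type*} (g : ∀ i : Fin n, (∀ j, A j) → A i)

def react (S : Finset (Fin n)) (x : ∀ j, A j) : ∀ j, A j :=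
  fun j => if j ∈ S then g j x else x j

theorem dynamics_succ (x : ∀ j, A j) (σ : ℕ → Finset (Fin n)) (t : ℕ) :
    dynamics g x σ (t + 1) = react g (σ (t + 1)) (dynamics g x σ t) :=
  rfl

theorem react_singleton (i : Fin n) (x : ∀ j, A j) : react g {i} x = update x i (g i x) := by
  funext j
  by_cases hj : j = i
  · subst hj
    simp [react]
  · simp [react, hj]

theorem react_singleton_update {i : Fin n} (hsi : SelfIndependent i (g i)) (x : ∀ j, A j)
    (v : A i) : react g {i} (update x i v) = react g {i} x := by
  rw [react_singleton, react_singleton, update_idem,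
    hsi (update x i v) x fun j hj => update_of_ne hj v x]

theorem dynamics_consSchedule_succ (S : Finset (Fin n)) (ρ : ℕ → Finset (Fin n))
    (x : ∀ j, A j) (t : ℕ) :
    dynamics g x (consSchedule S ρ) (t + 1) = dynamics g (react g S x) ρ t := by
  induction t with
  | zero => rfl
  | succ t ih => rw [dynamics_succ, ih, dynamics_succ]; rfl

theorem Fair.consSchedule {S : Finset (Fin n)} {ρ : ℕ → Finset (Fin n)} (hρ : Fair ρ) :
    Fair (consSchedule S ρ) := by
  intro i N
  obtain ⟨t, hNt, hit⟩ := hρ i (N + 1)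
  obtain ⟨u, rfl⟩ : ∃ u, t = u + 1 := ⟨t - 1, by omega⟩
  exact ⟨u + 2, by omega, hit⟩

theorem Stable.of_convergesTo {x c : ∀ j, A j} {σ : ℕ → Finset (Fin n)} (hfair : Fair σ)
    (hc : ConvergesTo g x σ c) : Stable g c := by
  obtain ⟨t0, ht0⟩ := hc
  intro i
  obtain ⟨t, ht, hit⟩ := hfair i (t0 + 1)
  obtain ⟨u, rfl⟩ : ∃ u, t = u + 1 := ⟨t - 1, by omega⟩
  have hstep := congrFun (dynamics_succ g x σ u) i
  rw [ht0 u (by omega), ht0 (u + 1) (by omega), react, if_pos hit] at hstep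
  exact hstep.symm

def Reaches (x c : ∀ j, A j) : Prop :=
  ∃ τ : ℕ → Finset (Fin n), (∀ t, (τ t).Nonempty) ∧ Fair τ ∧ ConvergesTo g x τ c

variable {g}

theorem Reaches.of_react {S : Finset (Fin n)} (hS : S.Nonempty) {x c : ∀ j, A j}
    (h : Reaches g (react g S x) c) : Reaches g x c := by
  obtain ⟨ρ, hρ, hfair, t0, ht0⟩ := h
  refine ⟨consSchedule S ρ, ?_, hfair.consSchedule, t0 + 1, fun t ht => ?_⟩
  · rintro (_ | _ | t)
    exacts [hS, hS, hρ _]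
  · obtain ⟨u, rfl⟩ : ∃ u, t = u + 1 := ⟨t - 1, by omega⟩
    rw [dynamics_consSchedule_succ]
    exact ht0 u (by omega)

theorem Convergent.exists_reaches (hconv : Convergent g) {ρ : ℕ → Finset (Fin n)}
    (hρ : ∀ t, (ρ t).Nonempty) (hfair : Fair ρ) (x : ∀ j, A j) : ∃ c, Reaches g x c := by
  obtain ⟨t0, ht0⟩ := hconv x ρ hρ hfair
  exact ⟨_, ρ, hρ, hfair, t0, ht0⟩

theorem exists_reaches_and_reaches_update {i : Fin n} (hsi : SelfIndependent i (g i))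
    (hconv : Convergent g) {ρ : ℕ → Finset (Fin n)} (hρ : ∀ t, (ρ t).Nonempty)
    (hfair : Fair ρ) (x : ∀ j, A j) (v : A i) :
    ∃ c, Reaches g x c ∧ Reaches g (update x i v) c := by
  obtain ⟨c, hc⟩ := hconv.exists_reaches hρ hfair (react g {i} x)
  refine ⟨c, hc.of_react (Finset.singleton_nonempty i), Reaches.of_react
    (Finset.singleton_nonempty i) ?_⟩
  rwa [react_singleton_update g hsi]

end Dynamics

theorem polychromatic_initial_state_exists_general
    {n : ℕ} {A : Fin n → Type*}
    (g : ∀ i : Fin n, (∀ j, A j) → A i)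
    (hsi : ∀ i, SelfIndependent i (g i))
    (hconv : Convergent g)
    (s s' : ∀ j, A j) (σ σ' : ℕ → Finset (Fin n))
    (hσ : ∀ t, (σ t).Nonempty) (hfair : Fair σ)
    (hσ' : ∀ t, (σ' t).Nonempty) (hfair' : Fair σ')
    (a b : ∀ j, A j) (hab : a ≠ b)
    (hca : ConvergesTo g s σ a) (hcb : ConvergesTo g s' σ' b) :
    ∃ (s0 : ∀ j, A j) (σ1 σ2 : ℕ → Finset (Fin n)) (a' b' : ∀ j, A j),
      (∀ t, (σ1 t).Nonempty) ∧ Fair σ1 ∧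
      (∀ t, (σ2 t).Nonempty) ∧ Fair σ2 ∧
      Stable g a' ∧ Stable g b' ∧ a' ≠ b' ∧
      ConvergesTo g s0 σ1 a' ∧ ConvergesTo g s0 σ2 b' := by
  by_contra hpoly
  have hunique : ∀ x c d, Reaches g x c → Reaches g x d → c = d := by
    intro x c d hc hd
    by_contra hcd
    obtain ⟨τ₁, hτ₁, hfair₁, hc₁⟩ := hc
    obtain ⟨τ₂, hτ₂, hfair₂, hd₂⟩ := hd
    exact hpoly ⟨x, τ₁, τ₂, c, d, hτ₁, hfair₁, hτ₂, hfair₂, Stable.of_convergesTo g hfair₁ hc₁,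
      Stable.of_convergesTo g hfair₂ hd₂, hcd, hc₁, hd₂⟩
  have hupdate : ∀ x i v, Reaches g x a → Reaches g (update x i v) a := by
    intro x i v hx
    obtain ⟨c, hxc, hyc⟩ := exists_reaches_and_reaches_update (hsi i) hconv hσ hfair x v
    rwa [hunique x a c hx hxc]
  have hs'a : Reaches g s' a := imp_of_forall_update hupdate s s' ⟨σ, hσ, hfair, hca⟩
  exact hab (hunique s' a b hs'a ⟨σ', hσ', hfair', hcb⟩)

/-- In a convergent system of deterministic, historyless,
self-independent reaction functions, if two (initial profile, fair schedule)
pairs lead to two distinct stable states, then there is a single initial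
profile from which two fair schedules lead to two distinct stable states
(a polychromatic initial state exists). -/
theorem polychromatic_initial_state_exists
    {n : ℕ} {A : Fin n → Type*} [∀ i, Nonempty (A i)]
    (g : ∀ i : Fin n, (∀ j, A j) → A i)
    (hsi : ∀ i, SelfIndependent i (g i))
    (hconv : Convergent g)
    (s s' : ∀ j, A j) (σ σ' : ℕ → Finset (Fin n))
    (hσ : ∀ t, (σ t).Nonempty) (hfair : Fair σ)
    (hσ' : ∀ t, (σ' t).Nonempty) (hfair' : Fair σ')
    (a b : ∀ j, A j) (hab : a ≠ b)
    (hsa : Stable g a) (hsb : Stable g b)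
    (hca : ConvergesTo g s σ a) (hcb : ConvergesTo g s' σ' b) :
    ∃ (s0 : ∀ j, A j) (σ1 σ2 : ℕ → Finset (Fin n)) (a' b' : ∀ j, A j),
      (∀ t, (σ1 t).Nonempty) ∧ Fair σ1 ∧
      (∀ t, (σ2 t).Nonempty) ∧ Fair σ2 ∧
      Stable g a' ∧ Stable g b' ∧ a' ≠ b' ∧
      ConvergesTo g s0 σ1 a' ∧ ConvergesTo g s0 σ2 b' :=
  polychromatic_initial_state_exists_general g hsi hconv s s' σ σ' hσ hfair hσ' hfair' a b hab hca
    hcb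
end
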